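/- arXiv:2108.12426 — 2 statements merged into one kernel-verified Lean document; each statement's English description precedes it below -/
import Mathlib

section
/- Let φ ∈ C¹(ℝ) be convex with nondecreasing left-continuous derivative φ'. For all x, y ∈ ℝ, φ(y) − φ(κ_{a,b}(x−y)+y) + κ_{a,b}(x−y)·φ'(x) = 2·∫_ℝ S^H_{1/2,a,b,θ}(x,y) dφ'(θ), where the elementary score is S^H_{1/2,a,b,θ}(x,y) = (1/2)·min(θ−y, b) if y ≤ θ < x, (1/2)·min(y−θ, a) if x ≤ θ < y, and 0 otherwise, and dφ'(θ) is the Lebesgue–Stieltjes measure of φ'. -/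
/-! The score vanishes unless `θ` lies between `x` and `y`. For `y ≤ x` the layer-cake formula
computes `∫ θ in [y, x), min (θ - y) b df`: for `0 < t ≤ κ = min (x - y) b` the superlevel set
`{θ | t ≤ min (θ - y) b}` is `[y + t, x)`, of `df`-mass `f x - f (y + t)` since `f` is
continuous, and `∫₀^κ f (y + t) dt = φ (y + κ) - φ y` because `φ' = f`. The case `x ≤ y` is the
mirror image. -/

open Set MeasureTheory

/-- The capping function `κ_{a,b}(x) = max(min(x,b), -a)`. -/
noncomputable def kap (a b x : ℝ) : ℝ := max (min x b) (-a)

/-- Elementary scoring function `S^H_{α,a,b,θ}` for the Huber functional. -/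
noncomputable def elemScore (α a b θ x y : ℝ) : ℝ :=
  if y ≤ θ ∧ θ < x then (1 - α) * min (θ - y) b
  else if x ≤ θ ∧ θ < y then α * min (y - θ) a
  else 0

lemma kap_of_nonneg {a b u : ℝ} (ha : 0 ≤ a) (hb : 0 ≤ b) (hu : 0 ≤ u) :
    kap a b u = min u b :=
  max_eq_left ((neg_nonpos.2 ha).trans (le_min hu hb))

lemma kap_of_nonpos {a b u : ℝ} (hb : 0 ≤ b) (hu : u ≤ 0) : kap a b u = -min (-u) a := by
  rw [kap, min_eq_left (hu.trans hb), ← max_neg_neg, neg_neg]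

lemma integral_elemScore_of_le (α a b : ℝ) {x y : ℝ} (μ : Measure ℝ) (h : y ≤ x) :
    ∫ θ, elemScore α a b θ x y ∂μ = (1 - α) * ∫ θ in Ico y x, min (θ - y) b ∂μ := by
  rw [← integral_const_mul, ← integral_indicator measurableSet_Ico]
  congr 1 with θ
  have : ¬(x ≤ θ ∧ θ < y) := fun h' => by linarith [h'.1, h'.2]
  simp [elemScore, indicator, this]
lemma integral_elemScore_of_ge (α a b : ℝ) {x y : ℝ} (μ : Measure ℝ) (h : x ≤ y) :
    ∫ θ, elemScore α a b θ x y ∂μ = α * ∫ θ in Ico x y, min (y - θ) a ∂μ := by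
  rw [← integral_const_mul, ← integral_indicator measurableSet_Ico]
  congr 1 with θ
  have : ¬(y ≤ θ ∧ θ < x) := fun h' => by linarith [h'.1, h'.2]
  simp [elemScore, indicator, this]

lemma setIntegral_Ico_eq_integral_Ioc_meas_le {μ : Measure ℝ} [IsLocallyFiniteMeasure μ]
    {g : ℝ → ℝ} {c d M : ℝ} (hg : Continuous g) (hg0 : ∀ θ ∈ Ico c d, 0 ≤ g θ)
    (hgM : ∀ θ ∈ Ico c d, g θ ≤ M) :
    ∫ θ in Ico c d, g θ ∂μ = ∫ t in Ioc 0 M, (μ.restrict (Ico c d)).real {θ | t ≤ g θ} :=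
  (hg.integrableOn_Icc.mono_set Ico_subset_Icc_self).integral_eq_integral_Ioc_meas_le
    (ae_restrict_of_forall_mem measurableSet_Ico hg0)
    (ae_restrict_of_forall_mem measurableSet_Ico hgM)

namespace StieltjesFunction

variable {f : StieltjesFunction ℝ}

lemma measureReal_Ico_of_continuous (hf : Continuous f) {c d : ℝ} (h : c ≤ d) :
    f.measure.real (Ico c d) = f d - f c := by
  rw [measureReal_def, measure_Ico, hf.continuousWithinAt.leftLim_eq,
    hf.continuousWithinAt.leftLim_eq, ENNReal.toReal_ofReal (sub_nonneg.2 (f.mono h))]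

lemma measureReal_Icc_of_continuous (hf : Continuous f) {c d : ℝ} (h : c ≤ d) :
    f.measure.real (Icc c d) = f d - f c := by
  rw [measureReal_def, measure_Icc, hf.continuousWithinAt.leftLim_eq,
    ENNReal.toReal_ofReal (sub_nonneg.2 (f.mono h))]

variable {φ : ℝ → ℝ}

lemma setIntegral_Ico_min_sub_left (hderiv : ∀ t, HasDerivAt φ (f t) t) (hf : Continuous f)
    {b c d : ℝ} (hb : 0 ≤ b) (hcd : c ≤ d) :
    ∫ θ in Ico c d, min (θ - c) b ∂f.measure
      = min (d - c) b * f d - (φ (c + min (d - c) b) - φ c) := by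
  set κ := min (d - c) b
  have hκ : 0 ≤ κ := le_min (sub_nonneg.2 hcd) hb
  have hlevel : ∀ t ∈ Ioc 0 κ,
      (f.measure.restrict (Ico c d)).real {θ | t ≤ min (θ - c) b} = f d - f (c + t) := by
    rintro t ⟨ht0, htκ⟩
    have htb : t ≤ b := htκ.trans (min_le_right _ _)
    have hset : {θ | t ≤ min (θ - c) b} ∩ Ico c d = Ico (c + t) d := by
      ext θ
      simp only [mem_inter_iff, mem_ofPred_eq, le_min_iff, mem_Ico]
      constructor
      · rintro ⟨⟨h1, -⟩, -, h2⟩; exact ⟨by linarith, h2⟩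
      · rintro ⟨h1, h2⟩; exact ⟨⟨by linarith, htb⟩, by linarith, h2⟩
    rw [measureReal_restrict_apply (measurableSet_le measurable_const (by fun_prop)), hset,
      measureReal_Ico_of_continuous hf (by linarith [htκ.trans (min_le_left _ _)])]
  have hftc : ∫ t in 0..κ, f (c + t) = φ (c + κ) - φ c := by
    rw [intervalIntegral.integral_comp_add_left (fun t => f t), add_zero,
      intervalIntegral.integral_eq_sub_of_hasDerivAt (fun t _ => hderiv t)
        (hf.intervalIntegrable _ _)]
  calc ∫ θ in Ico c d, min (θ - c) b ∂f.measure
      = ∫ t in Ioc 0 κ, (f d - f (c + t)) := by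
        rw [setIntegral_Ico_eq_integral_Ioc_meas_le (M := κ) (by fun_prop)
          (fun θ hθ => le_min (sub_nonneg.2 hθ.1) hb)
          (fun θ hθ => min_le_min_right b (by linarith [hθ.2]))]
        exact setIntegral_congr_fun measurableSet_Ioc hlevel
    _ = κ * f d - (φ (c + κ) - φ c) := by
        rw [← intervalIntegral.integral_of_le hκ, intervalIntegral.integral_sub
          intervalIntegrable_const
          ((by fun_prop : Continuous fun t => f (c + t)).intervalIntegrable _ _),
          hftc, intervalIntegral.integral_const, smul_eq_mul, sub_zero]

lemma setIntegral_Ico_min_sub_right (hderiv : ∀ t, HasDerivAt φ (f t) t) (hf : Continuous f)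
    {a c d : ℝ} (ha : 0 ≤ a) (hcd : c ≤ d) :
    ∫ θ in Ico c d, min (d - θ) a ∂f.measure
      = φ d - φ (d - min (d - c) a) - min (d - c) a * f c := by
  set κ := min (d - c) a
  have hκ : 0 ≤ κ := le_min (sub_nonneg.2 hcd) ha
  have hlevel : ∀ t ∈ Ioc 0 κ,
      (f.measure.restrict (Ico c d)).real {θ | t ≤ min (d - θ) a} = f (d - t) - f c := by
    rintro t ⟨ht0, htκ⟩
    have hta : t ≤ a := htκ.trans (min_le_right _ _)
    have hset : {θ | t ≤ min (d - θ) a} ∩ Ico c d = Icc c (d - t) := by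
      ext θ
      simp only [mem_inter_iff, mem_ofPred_eq, le_min_iff, mem_Ico, mem_Icc]
      constructor
      · rintro ⟨⟨h1, -⟩, h2, -⟩; exact ⟨h2, by linarith⟩
      · rintro ⟨h1, h2⟩; exact ⟨⟨by linarith, hta⟩, h1, by linarith⟩
    rw [measureReal_restrict_apply (measurableSet_le measurable_const (by fun_prop)), hset,
      measureReal_Icc_of_continuous hf (by linarith [htκ.trans (min_le_left _ _)])]
  have hftc : ∫ t in 0..κ, f (d - t) = φ d - φ (d - κ) := by
    rw [intervalIntegral.integral_comp_sub_left (fun t => f t), sub_zero,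
      intervalIntegral.integral_eq_sub_of_hasDerivAt (fun t _ => hderiv t)
        (hf.intervalIntegrable _ _)]
  calc ∫ θ in Ico c d, min (d - θ) a ∂f.measure
      = ∫ t in Ioc 0 κ, (f (d - t) - f c) := by
        rw [setIntegral_Ico_eq_integral_Ioc_meas_le (M := κ) (by fun_prop)
          (fun θ hθ => le_min (sub_nonneg.2 hθ.2.le) ha)
          (fun θ hθ => min_le_min_right a (by linarith [hθ.1]))]
        exact setIntegral_congr_fun measurableSet_Ioc hlevel
    _ = φ d - φ (d - κ) - κ * f c := by
        rw [← intervalIntegral.integral_of_le hκ, intervalIntegral.integral_sub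
          ((by fun_prop : Continuous fun t => f (d - t)).intervalIntegrable _ _)
          intervalIntegrable_const, hftc, intervalIntegral.integral_const, smul_eq_mul, sub_zero]

end StieltjesFunction

theorem stmt15_general (a b : ℝ) (ha : 0 < a) (hb : 0 < b)
    (φ : ℝ → ℝ) (f : StieltjesFunction ℝ)
    (hderiv : ∀ t : ℝ, HasDerivAt φ (f t) t) (hcont : Continuous f) :
    ∀ x y : ℝ, φ y - φ (kap a b (x - y) + y) + kap a b (x - y) * f x
      = 2 * ∫ θ, elemScore (1 / 2) a b θ x y ∂f.measure := by
  intro x y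
  rcases le_total y x with hyx | hxy
  · rw [kap_of_nonneg ha.le hb.le (sub_nonneg.2 hyx), integral_elemScore_of_le _ _ _ _ hyx,
      f.setIntegral_Ico_min_sub_left hderiv hcont hb.le hyx, add_comm _ y]
    ring
  · rw [kap_of_nonpos hb.le (sub_nonpos.2 hxy), integral_elemScore_of_ge _ _ _ _ hxy,
      f.setIntegral_Ico_min_sub_right hderiv hcont ha.le hxy, neg_sub, neg_add_eq_sub]
    ring

/-- Mixture representation identity (case `α = 1/2`): for a convex `C¹` function `φ` with
nondecreasing derivative `φ'`,
`φ(y) − φ(κ_{a,b}(x−y)+y) + κ_{a,b}(x−y)·φ'(x) = 2∫ S^H_{1/2,a,b,θ}(x,y) dφ'(θ)`,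
where `dφ'` is the Lebesgue–Stieltjes measure of `φ'`. -/
theorem stmt15 (a b : ℝ) (ha : 0 < a) (hb : 0 < b)
    (φ : ℝ → ℝ) (f : StieltjesFunction ℝ) (hconv : ConvexOn ℝ Set.univ φ)
    (hderiv : ∀ t : ℝ, HasDerivAt φ (f t) t) (hcont : Continuous f) :
    ∀ x y : ℝ, φ y - φ (kap a b (x - y) + y) + kap a b (x - y) * f x
      = 2 * ∫ θ, elemScore (1 / 2) a b θ x y ∂f.measure :=
  stmt15_general a b ha hb φ f hderiv hcont
end

section
/- Let F be a probability distribution on ℝ with compact support, a > 0, b > 0, α ∈ (0,1), and S(x,y) = h^α_{a,b}(x−y) the generalized Huber loss score. If t ∈ H^α_{a,b}(F) and x ∈ ℝ, then E_F S(t,Y) ≤ E_F S(x,Y); i.e., generalized Huber loss is consistent for the Huber functional. -/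
/-! Write `h = h^α_{a,b}` as `h(u) = (1 - α) ρ_b(u) + α ρ_a(-u)`, where `ρ_c = oneSidedHuber c`
is convex with derivative `min (u₊, c)`. Hence `h` is convex with derivative
`φ(u) = (1 - α) min (u₊, b) - α min (u₋, a)`, so `h(t - y) + φ(t - y) (x - t) ≤ h(x - y)` for all
`y`. Integrating over `Y ∼ F` (compact support makes every continuous score integrable), the
correction term vanishes because `t ∈ H^α_{a,b}(F)` says exactly `E φ(t - Y) = 0`. -/

open Set MeasureTheory

/-- The generalized Huber loss `h^α_{a,b}`. -/
noncomputable def genHuber (α a b u : ℝ) : ℝ :=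
  if u < -a then -α * a * (u + a / 2)
  else if b < u then (1 - α) * b * (u - b / 2)
  else |(if 0 ≤ u then (1 : ℝ) else 0) - α| * u ^ 2 / 2

noncomputable def oneSidedHuber (c u : ℝ) : ℝ :=
  if u ≤ 0 then 0 else if u ≤ c then u ^ 2 / 2 else c * (u - c / 2)

lemma oneSidedHuber_of_nonpos {c u : ℝ} (hu : u ≤ 0) : oneSidedHuber c u = 0 :=
  if_pos hu

lemma oneSidedHuber_of_nonneg_of_le {c u : ℝ} (hu : 0 ≤ u) (huc : u ≤ c) :
    oneSidedHuber c u = u ^ 2 / 2 := by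
  rcases hu.eq_or_lt with rfl | hu
  · simp [oneSidedHuber]
  · rw [oneSidedHuber, if_neg hu.not_ge, if_pos huc]

lemma oneSidedHuber_of_lt {c u : ℝ} (hc : 0 ≤ c) (hcu : c < u) :
    oneSidedHuber c u = c * (u - c / 2) := by
  rw [oneSidedHuber, if_neg (by linarith), if_neg hcu.not_ge]

lemma continuous_oneSidedHuber {c : ℝ} (hc : 0 ≤ c) : Continuous (oneSidedHuber c) := by
  refine Continuous.if_le continuous_const ?_ continuous_id continuous_const ?_
  · exact Continuous.if_le (by fun_prop) (by fun_prop) continuous_id continuous_const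
      fun u hu => by rw [hu]; ring
  · intro u hu
    rw [hu, if_pos hc]
    ring

lemma oneSidedHuber_add_mul_le {c : ℝ} (hc : 0 ≤ c) (u v : ℝ) :
    oneSidedHuber c u + min (max u 0) c * (v - u) ≤ oneSidedHuber c v := by
  unfold oneSidedHuber
  rcases le_or_gt u 0 with hu0 | hu0
  · rw [if_pos hu0, max_eq_right hu0, min_eq_left hc]
    split_ifs <;> nlinarith
  rcases le_or_gt u c with huc | huc
  · rw [if_neg hu0.not_ge, if_pos huc, max_eq_left hu0.le, min_eq_left huc]
    split_ifs <;> nlinarith [sq_nonneg (v - u)]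
  · rw [if_neg hu0.not_ge, if_neg huc.not_ge, max_eq_left hu0.le, min_eq_right huc.le]
    split_ifs <;> nlinarith

lemma genHuber_eq_oneSidedHuber {α a b : ℝ} (ha : 0 ≤ a) (hb : 0 ≤ b) (hα : α ∈ Icc 0 1)
    (u : ℝ) : genHuber α a b u = (1 - α) * oneSidedHuber b u + α * oneSidedHuber a (-u) := by
  unfold genHuber
  split_ifs with hua hbu hu
  · rw [oneSidedHuber_of_nonpos (by linarith), oneSidedHuber_of_lt ha (by linarith)]
    ring
  · rw [oneSidedHuber_of_lt hb hbu, oneSidedHuber_of_nonpos (by linarith)]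
    ring
  · rw [abs_of_nonneg (by linarith [hα.2]), oneSidedHuber_of_nonneg_of_le hu (not_lt.1 hbu),
      oneSidedHuber_of_nonpos (by linarith)]
    ring
  · rw [abs_of_nonpos (by linarith [hα.1]), oneSidedHuber_of_nonpos (by linarith),
      oneSidedHuber_of_nonneg_of_le (by linarith) (by linarith)]
    ring

noncomputable def genHuberDeriv (α a b u : ℝ) : ℝ :=
  (1 - α) * min (max u 0) b - α * min (max (-u) 0) a

lemma genHuber_add_deriv_mul_le {α a b : ℝ} (ha : 0 ≤ a) (hb : 0 ≤ b) (hα : α ∈ Icc 0 1)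
    (u v : ℝ) : genHuber α a b u + genHuberDeriv α a b u * (v - u) ≤ genHuber α a b v := by
  have hpos := oneSidedHuber_add_mul_le hb u v
  have hneg := oneSidedHuber_add_mul_le ha (-u) (-v)
  rw [genHuber_eq_oneSidedHuber ha hb hα, genHuber_eq_oneSidedHuber ha hb hα, genHuberDeriv]
  linarith [mul_le_mul_of_nonneg_left hpos (sub_nonneg.2 hα.2),
    mul_le_mul_of_nonneg_left hneg hα.1]

lemma continuous_genHuber {α a b : ℝ} (ha : 0 ≤ a) (hb : 0 ≤ b) (hα : α ∈ Icc 0 1) :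
    Continuous (genHuber α a b) := by
  have hρa := continuous_oneSidedHuber ha
  have hρb := continuous_oneSidedHuber hb
  simp_rw [funext (genHuber_eq_oneSidedHuber ha hb hα)]
  fun_prop

lemma Continuous.integrable_of_measure_compl_eq_zero {X E : Type*} [TopologicalSpace X]
    [T2Space X] [MeasurableSpace X] [OpensMeasurableSpace X] [NormedAddCommGroup E]
    {μ : Measure X} [IsFiniteMeasureOnCompacts μ] {f : X → E} (hf : Continuous f) {K : Set X}
    (hK : IsCompact K) (hμK : μ Kᶜ = 0) : Integrable f μ := by
  rw [← Measure.restrict_eq_self_of_ae_mem (ae_iff.2 hμK)]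
  exact hf.continuousOn.integrableOn_compact hK

/-- Generalized Huber loss is consistent for the Huber functional: for a compactly
supported probability distribution `F`, any `t ∈ H^α_{a,b}(F)` minimizes the expected
generalized Huber loss score. -/
theorem stmt19 (a b α : ℝ) (ha : 0 < a) (hb : 0 < b) (hα : α ∈ Set.Ioo (0 : ℝ) 1)
    (μ : Measure ℝ) [IsProbabilityMeasure μ]
    (K : Set ℝ) (hK : IsCompact K) (hμK : μ Kᶜ = 0) (t x : ℝ)
    (ht : α * ∫ y, min (max (y - t) 0) a ∂μ = (1 - α) * ∫ y, min (max (t - y) 0) b ∂μ) :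
    ∫ y, genHuber α a b (t - y) ∂μ ≤ ∫ y, genHuber α a b (x - y) ∂μ := by
  have hα' : α ∈ Icc 0 1 := Ioo_subset_Icc_self hα
  have hint {g : ℝ → ℝ} (hg : Continuous g) : Integrable g μ :=
    hg.integrable_of_measure_compl_eq_zero hK hμK
  have hscore (c : ℝ) : Integrable (fun y => genHuber α a b (c - y)) μ :=
    hint ((continuous_genHuber ha.le hb.le hα').comp (by fun_prop))
  have hderiv : Integrable (fun y => genHuberDeriv α a b (t - y) * (x - t)) μ :=
    hint (by unfold genHuberDeriv; fun_prop)
  have hmean : ∫ y, genHuberDeriv α a b (t - y) ∂μ = 0 := by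
    simp only [genHuberDeriv, neg_sub]
    rw [integral_sub (hint (by fun_prop)) (hint (by fun_prop)), integral_const_mul,
      integral_const_mul, ht, sub_self]
  calc ∫ y, genHuber α a b (t - y) ∂μ
      = ∫ y, genHuber α a b (t - y) + genHuberDeriv α a b (t - y) * (x - t) ∂μ := by
        rw [integral_add (hscore t) hderiv, integral_mul_const, hmean, zero_mul, add_zero]
    _ ≤ ∫ y, genHuber α a b (x - y) ∂μ :=
        integral_mono ((hscore t).add hderiv) (hscore x) fun y => by
          simpa using genHuber_add_deriv_mul_le ha.le hb.le hα' (t - y) (x - y)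
end
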